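/- arXiv:math/0507056 — 2 statements merged into one kernel-verified Lean document; each statement's English description precedes it below -/
import Mathlib

section
/- For type D_n, the polyhedral realization Σ_ι is the set of (x_{j;i}) satisfying: x_{j;i}=0 unless 1 ≤ j ≤ n−1 and 1 ≤ i ≤ n; x_{1;i} ≥ x_{2;i−1} ≥ ⋯ ≥ x_{i;1} ≥ 0 for 1 ≤ i ≤ n−2; x_{j;n−1}+x_{j;n} ≥ x_{j+1;n−2} ≥ ⋯ ≥ x_{n−1;j} ≥ 0 for 1 ≤ j ≤ n−2; x_{j;n−j} ≥ x_{j;n−j+1} ≥ ⋯ ≥ x_{j;n−2} ≥ x_{j;n−1}+x_{j;n} ≥ 0 for 2 ≤ j ≤ n−1; and for n odd the chains x_{1;n−1} ≥ x_{2;n} ≥ x_{3;n−1} ≥ ⋯ ≥ x_{n−1;n} ≥ 0 and x_{1;n} ≥ x_{2;n−1} ≥ x_{3;n} ≥ ⋯ ≥ x_{n−1;n−1} ≥ 0 (with the analogous alternating chains ending in x_{n−1;n−1} and x_{n−1;n} respectively when n is even). -/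
/-
Write `y j i` for `x_{j;i}`; once `Yc n y` is identified with `y`, both sides are finite
families of linear inequalities. The heart of the matter is that the inequalities of `Ξ_ι`
force all rows `j ≥ n` to vanish: along an anti-diagonal `j + i = const` the entries decrease
towards `y _ 1 ≥ 0`, so every entry with `1 ≤ i ≤ n - 2` is nonnegative, while on a row `j ≥ n`
the inequalities `φ_{j';k}`, `k > n`, make `i ↦ y j i` decrease from `y j 0 = 0`; the last two
columns of such a row then vanish because their sum is bounded by `y j (n - 2) = 0`.
Conversely, the alternating chains give nonnegativity of the last two columns, and every
inequality of `Ξ_ι` is one of the explicit ones or becomes trivial once these zeros and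
nonnegativities are inserted.
-/

open scoped Classical

noncomputable section

/-- position (j;i) ↦ (j-1)*n + i in the singly-indexed lattice. -/
def pos (n j i : ℕ) : ℕ := (j - 1) * n + i

/-- the cyclic sequence ι = (…, n, …, 2, 1, n, …, 2, 1): position k ≥ 1 carries index ((k-1) % n)+1. -/
def iotaSeq (n k : ℕ) : ℕ := (k - 1) % n + 1

variable {I : Type*}

/-- σ_k(x) = x_k + Σ_{j>k} ⟨h_{i_k}, α_{i_j}⟩ x_j. -/
def sigmaPL (a : I → I → ℤ) (ι : ℕ → I) (x : ℕ → ℤ) (k : ℕ) : ℤ :=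
  x k + ∑' j : ℕ, if k < j then a (ι k) (ι j) * x j else 0
/-- doubly-indexed coordinate with out-of-range convention x_{j;0} = x_{j;n+1} = 0. -/
def Yc (n : ℕ) (y : ℕ → ℕ → ℤ) (j i : ℕ) : ℤ :=
  if 1 ≤ j ∧ 1 ≤ i ∧ i ≤ n then y j i else 0

open Set

lemma antitoneOn_Icc_of_succ_le {α : Type*} [Preorder α] {f : ℕ → α} {a b : ℕ}
    (h : ∀ t, a ≤ t → t < b → f (t + 1) ≤ f t) : AntitoneOn f (Icc a b) :=
  antitoneOn_of_succ_le ordConnected_Icc fun t _ ht ht' => by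
    simp only [Order.succ_eq_add_one, mem_Icc] at ht ht'
    exact h t ht.1 (by omega)

lemma ite_parity_and_iff (P : ℕ → Prop) (t a b : ℕ) :
    (P (if t % 2 = 1 then a else b) ∧ P (if t % 2 = 1 then b else a)) ↔ P a ∧ P b := by
  split_ifs <;> tauto

lemma alternating_steps_iff (y : ℕ → ℕ → ℤ) (n t : ℕ) :
    (y (t + 1) (if (t + 1) % 2 = 1 then n - 1 else n) ≤ y t (if t % 2 = 1 then n - 1 else n) ∧
      y (t + 1) (if (t + 1) % 2 = 1 then n else n - 1) ≤ y t (if t % 2 = 1 then n else n - 1)) ↔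
    y (t + 1) (n - 1) ≤ y t n ∧ y (t + 1) n ≤ y t (n - 1) := by
  rcases Nat.mod_two_eq_zero_or_one t with h | h <;> simp [h, Nat.add_mod, and_comm]

/-- `diag`, `fork`, `spin_n_sub_one` and `join` are `φ_{j;k} ≥ 0` for `k ≤ n - 3`, `k = n - 2`,
`k = n - 1` and `k = n`; `row` is `φ_{j;k} ≥ 0` for `n < k`, reindexed by `i = 2n - k - 2`;
`spin_n` is the remaining element of `Ξ'_ι` and `nonneg_*` are the elements of `Ξ''_ι`. -/
structure XiNonneg (n : ℕ) (y : ℕ → ℕ → ℤ) : Prop where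
  diag : ∀ j k, 1 ≤ j → k ≤ n - 3 → y (j + 1) k ≤ y j (k + 1)
  fork : ∀ j, 1 ≤ j → y (j + 1) (n - 2) ≤ y j (n - 1) + y j n
  spin_n_sub_one : ∀ j, 1 ≤ j → y (j + 1) (n - 1) ≤ y j n
  join : ∀ j, 2 ≤ j → y j (n - 1) + y j n ≤ y j (n - 2)
  row : ∀ j i, n ≤ j + i → i ≤ n - 3 → y j (i + 1) ≤ y j i
  spin_n : ∀ j, 1 ≤ j → y (j + 1) n ≤ y j (n - 1)
  nonneg_n_sub_one : ∀ j, 1 ≤ j → 0 ≤ y j (n - 1)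
  nonneg_n : ∀ j, 1 ≤ j → 0 ≤ y j n

variable {n : ℕ} {y : ℕ → ℕ → ℤ}

theorem Yc_eq_self (hconv : ∀ j i, j = 0 ∨ i = 0 ∨ n < i → y j i = 0) : Yc n y = y := by
  ext j i
  unfold Yc
  split_ifs with h
  · rfl
  · exact (hconv j i (by omega)).symm

theorem xiNonneg_iff (hn : 3 ≤ n) (hconv : ∀ j i, j = 0 ∨ i = 0 ∨ n < i → y j i = 0) :
    ((∀ j k : ℕ, 1 ≤ j → k ≤ 2 * n - 2 →
      0 ≤ (if k ≤ n - 3 then Yc n y j (k + 1) - Yc n y (j + 1) k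
           else if k = n - 2 then Yc n y j (n - 1) + Yc n y j n - Yc n y (j + 1) (n - 2)
           else if k = n - 1 then Yc n y j n - Yc n y (j + 1) (n - 1)
           else if k = n then
             Yc n y (j + 1) (n - 2) - Yc n y (j + 1) (n - 1) - Yc n y (j + 1) n
           else Yc n y (j + k - n + 1) (2 * n - k - 2) - Yc n y (j + k - n + 1) (2 * n - k - 1))) ∧
     (∀ j : ℕ, 1 ≤ j → 0 ≤ Yc n y j (n - 1) - Yc n y (j + 1) n) ∧
     (∀ j : ℕ, 1 ≤ j → 0 ≤ y j (n - 1) ∧ 0 ≤ y j n)) ↔ XiNonneg n y := by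
  simp only [Yc_eq_self hconv]
  constructor
  · rintro ⟨hXi, hspin, hnonneg⟩
    refine ⟨fun j k hj hk => ?_, fun j hj => ?_, fun j hj => ?_, fun j hj => ?_,
      fun j i hji hi => ?_, fun j hj => sub_nonneg.1 (hspin j hj), fun j hj => (hnonneg j hj).1,
      fun j hj => (hnonneg j hj).2⟩
    · simpa [hk] using hXi j k hj (by omega)
    · simpa [show ¬ n - 2 ≤ n - 3 by omega] using hXi j (n - 2) hj (by omega)
    · simpa [show ¬ n - 1 ≤ n - 3 by omega, show n - 1 ≠ n - 2 by omega]
        using hXi j (n - 1) hj (by omega)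
    · obtain ⟨j, rfl⟩ : ∃ j', j = j' + 1 := ⟨j - 1, by omega⟩
      have := hXi j n (by omega) (by omega)
      simp only [show ¬ n ≤ n - 3 by omega, show n ≠ n - 2 by omega, show n ≠ n - 1 by omega,
        if_false, if_true] at this
      linarith
    · have h := hXi (j + i + 1 - n) (2 * n - 2 - i) (by omega) (by omega)
      rw [if_neg (by omega), if_neg (by omega), if_neg (by omega), if_neg (by omega),
        show j + i + 1 - n + (2 * n - 2 - i) - n + 1 = j by omega,
        show 2 * n - (2 * n - 2 - i) - 2 = i by omega,
        show 2 * n - (2 * n - 2 - i) - 1 = i + 1 by omega] at h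
      exact sub_nonneg.1 h
  · intro h
    refine ⟨fun j k hj hk => ?_, fun j hj => sub_nonneg.2 (h.spin_n j hj),
      fun j hj => ⟨h.nonneg_n_sub_one j hj, h.nonneg_n j hj⟩⟩
    split_ifs with hk3 hk2 hk1 hk0 <;> rw [sub_nonneg]
    · exact h.diag j k hj hk3
    · subst hk2; exact h.fork j hj
    · subst hk1; exact h.spin_n_sub_one j hj
    · subst hk0; linarith [h.join (j + 1) (by omega)]
    · have := h.row (j + k - n + 1) (2 * n - k - 2) (by omega) (by omega)
      rwa [show 2 * n - k - 2 + 1 = 2 * n - k - 1 by omega] at this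

namespace XiNonneg

theorem nonneg (h : XiNonneg n y) (hconv : ∀ j i, j = 0 ∨ i = 0 ∨ n < i → y j i = 0)
    {j i : ℕ} (hj : 1 ≤ j) (hi : 1 ≤ i) (hin : i ≤ n - 2) : 0 ≤ y j i := by
  have hanti : AntitoneOn (fun t => y t (j + i - t)) (Icc j (j + i - 1)) :=
    antitoneOn_Icc_of_succ_le fun t hjt ht => by
      have := h.diag t (j + i - (t + 1)) (by omega) (by omega)
      rwa [show j + i - (t + 1) + 1 = j + i - t by omega] at this
  have hend : 0 ≤ y (j + i - 1) 1 := by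
    simpa [hconv (j + i - 1 + 1) 0 (by omega)] using h.diag (j + i - 1) 0 (by omega) (by omega)
  calc 0 ≤ y (j + i - 1) (j + i - (j + i - 1)) := by rwa [show j + i - (j + i - 1) = 1 by omega]
    _ ≤ y j (j + i - j) := hanti ⟨le_rfl, by omega⟩ ⟨by omega, le_rfl⟩ (by omega)
    _ = y j i := by rw [Nat.add_sub_cancel_left]

theorem eq_zero_of_le (h : XiNonneg n y) (hconv : ∀ j i, j = 0 ∨ i = 0 ∨ n < i → y j i = 0)
    (hn : 2 ≤ n) {j : ℕ} (hj : n ≤ j) (i : ℕ) : y j i = 0 := by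
  have hanti : AntitoneOn (y j) (Icc 0 (n - 2)) :=
    antitoneOn_Icc_of_succ_le fun i _ hi => h.row j i (by omega) (by omega)
  have hrow : ∀ i ≤ n - 2, y j i ≤ 0 := fun i hi =>
    (hanti ⟨le_rfl, by omega⟩ ⟨Nat.zero_le _, hi⟩ (Nat.zero_le _)).trans_eq (hconv j 0 (by omega))
  rcases (by omega : i = 0 ∨ n < i ∨ (1 ≤ i ∧ i ≤ n - 2) ∨ i = n - 1 ∨ i = n)
    with hi | hi | ⟨hi, hin⟩ | hi | hi
  · exact hconv j i (by omega)
  · exact hconv j i (by omega)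
  · exact le_antisymm (hrow i hin) (h.nonneg hconv (by omega) hi hin)
  all_goals
    rw [hi]
    linarith [h.join j (by omega), hrow (n - 2) le_rfl, h.nonneg_n_sub_one j (by omega),
      h.nonneg_n j (by omega)]

end XiNonneg

def SigmaDExplicit (n : ℕ) (y : ℕ → ℕ → ℤ) : Prop :=
  (∀ j i, ¬(1 ≤ j ∧ j ≤ n - 1 ∧ 1 ≤ i ∧ i ≤ n) → y j i = 0) ∧
  (∀ i, 1 ≤ i → i ≤ n - 2 →
    (∀ t, 1 ≤ t → t < i → y (t + 1) (i - t) ≤ y t (i - t + 1)) ∧ 0 ≤ y i 1) ∧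
  (∀ j, 1 ≤ j → j ≤ n - 2 →
    y (j + 1) (n - 2) ≤ y j (n - 1) + y j n ∧
    (∀ t, j + 1 ≤ t → t < n - 1 → y (t + 1) (n + j - t - 2) ≤ y t (n + j - t - 1)) ∧
    0 ≤ y (n - 1) j) ∧
  (∀ j, 2 ≤ j → j ≤ n - 1 →
    (∀ i, n - j ≤ i → i < n - 2 → y j (i + 1) ≤ y j i) ∧
    y j (n - 1) + y j n ≤ y j (n - 2) ∧ 0 ≤ y j (n - 1) + y j n) ∧
  ((∀ t, 1 ≤ t → t < n - 1 →
    y (t + 1) (if (t + 1) % 2 = 1 then n - 1 else n) ≤ y t (if t % 2 = 1 then n - 1 else n)) ∧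
   0 ≤ y (n - 1) (if (n - 1) % 2 = 1 then n - 1 else n)) ∧
  ((∀ t, 1 ≤ t → t < n - 1 →
    y (t + 1) (if (t + 1) % 2 = 1 then n else n - 1) ≤ y t (if t % 2 = 1 then n else n - 1)) ∧
   0 ≤ y (n - 1) (if (n - 1) % 2 = 1 then n else n - 1))

theorem XiNonneg.sigmaDExplicit (h : XiNonneg n y) (hn : 3 ≤ n)
    (hconv : ∀ j i, j = 0 ∨ i = 0 ∨ n < i → y j i = 0) : SigmaDExplicit n y := by
  have hspin t (ht : 1 ≤ t) :=
    (alternating_steps_iff y n t).2 ⟨h.spin_n_sub_one t ht, h.spin_n t ht⟩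
  have hlast := (ite_parity_and_iff (0 ≤ y (n - 1) ·) (n - 1) (n - 1) n).2
    ⟨h.nonneg_n_sub_one (n - 1) (by omega), h.nonneg_n (n - 1) (by omega)⟩
  refine ⟨fun j i hji => ?_,
    fun i hi hin =>
      ⟨fun t ht hti => h.diag t (i - t) ht (by omega), h.nonneg hconv hi le_rfl (by omega)⟩,
    fun j hj hjn => ⟨h.fork j hj, fun t ht htn => ?_, h.nonneg hconv (by omega) hj hjn⟩,
    fun j hj hjn => ⟨fun i hi hin => h.row j i (by omega) (by omega), h.join j hj,
      add_nonneg (h.nonneg_n_sub_one j (by omega)) (h.nonneg_n j (by omega))⟩,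
    ⟨fun t ht _ => (hspin t ht).1, hlast.1⟩, ⟨fun t ht _ => (hspin t ht).2, hlast.2⟩⟩
  · by_cases hj : n ≤ j
    · exact h.eq_zero_of_le hconv (by omega) hj i
    · exact hconv j i (by omega)
  · simpa [show n + j - t - 1 = n + j - t - 2 + 1 by omega]
      using h.diag t (n + j - t - 2) (by omega) (by omega)

namespace SigmaDExplicit

theorem eq_zero_of_le (hE : SigmaDExplicit n y) {j : ℕ} (hj : n ≤ j) (i : ℕ) : y j i = 0 :=
  hE.1 j i (by omega)

theorem nonneg_n_sub_one_and_n (hE : SigmaDExplicit n y) {j : ℕ} (hj : 1 ≤ j) :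
    0 ≤ y j (n - 1) ∧ 0 ≤ y j n := by
  rcases le_or_gt n j with hjn | hjn
  · simp [hE.eq_zero_of_le hjn]
  obtain ⟨-, -, -, -, ⟨hA, hAend⟩, ⟨hB, hBend⟩⟩ := hE
  have hjmem : j ∈ Icc 1 (n - 1) := ⟨hj, by omega⟩
  have hendmem : n - 1 ∈ Icc 1 (n - 1) := ⟨by omega, le_rfl⟩
  have hA' : AntitoneOn (fun t => y t (if t % 2 = 1 then n - 1 else n)) (Icc 1 (n - 1)) :=
    antitoneOn_Icc_of_succ_le hA
  have hB' : AntitoneOn (fun t => y t (if t % 2 = 1 then n else n - 1)) (Icc 1 (n - 1)) :=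
    antitoneOn_Icc_of_succ_le hB
  exact (ite_parity_and_iff (0 ≤ y j ·) j (n - 1) n).1
    ⟨hAend.trans (hA' hjmem hendmem hjmem.2), hBend.trans (hB' hjmem hendmem hjmem.2)⟩


theorem spin (hE : SigmaDExplicit n y) {j : ℕ} (hj : 1 ≤ j) :
    y (j + 1) (n - 1) ≤ y j n ∧ y (j + 1) n ≤ y j (n - 1) := by
  rcases le_or_gt (n - 1) j with hjn | hjn
  · rw [hE.eq_zero_of_le (by omega : n ≤ j + 1), hE.eq_zero_of_le (by omega : n ≤ j + 1)]
    exact (hE.nonneg_n_sub_one_and_n hj).symm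
  obtain ⟨-, -, -, -, ⟨hA, -⟩, ⟨hB, -⟩⟩ := hE
  exact (alternating_steps_iff y n j).1 ⟨hA j hj hjn, hB j hj hjn⟩

theorem diag (hE : SigmaDExplicit n y) (hn : 3 ≤ n)
    (hconv : ∀ j i, j = 0 ∨ i = 0 ∨ n < i → y j i = 0)
    {j k : ℕ} (hj : 1 ≤ j) (hk : k ≤ n - 3) : y (j + 1) k ≤ y j (k + 1) := by
  have hzero : ∀ {j}, n ≤ j → ∀ i, y j i = 0 := hE.eq_zero_of_le
  obtain ⟨-, hdiag, hfork, -⟩ := hE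
  rcases le_or_gt n j with hjn | hjn
  · rw [hzero (by omega : n ≤ j + 1), hzero hjn]
  rcases Nat.eq_zero_or_pos k with rfl | hk0
  · rw [hconv (j + 1) 0 (by omega)]
    rcases (by omega : j ≤ n - 2 ∨ j = n - 1) with hjn | rfl
    · exact (hdiag j hj hjn).2
    · exact (hfork 1 le_rfl (by omega)).2.2
  rcases (by omega : j = n - 1 ∨ j + k ≤ n - 2 ∨ (j ≤ n - 2 ∧ n - 1 ≤ j + k))
    with rfl | hjk | ⟨hjn, hjk⟩
  · rw [hzero (by omega : n ≤ n - 1 + 1)]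
    exact (hfork (k + 1) (by omega) (by omega)).2.2
  · simpa using (hdiag (j + k) (by omega) hjk).1 j hj (by omega)
  · have := (hfork (j + k + 2 - n) (by omega) (by omega)).2.1 j (by omega) (by omega)
    rwa [show n + (j + k + 2 - n) - j - 2 = k by omega,
      show n + (j + k + 2 - n) - j - 1 = k + 1 by omega] at this

theorem xiNonneg (hE : SigmaDExplicit n y) (hn : 3 ≤ n)
    (hconv : ∀ j i, j = 0 ∨ i = 0 ∨ n < i → y j i = 0) : XiNonneg n y := by
  have hzero : ∀ {j}, n ≤ j → ∀ i, y j i = 0 := hE.eq_zero_of_le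
  have hnonneg : ∀ {j}, 1 ≤ j → 0 ≤ y j (n - 1) ∧ 0 ≤ y j n := hE.nonneg_n_sub_one_and_n
  refine ⟨fun _ _ hj hk => hE.diag hn hconv hj hk, fun j hj => ?_, fun _ hj => (hE.spin hj).1,
    fun j hj => ?_, fun j i hji hi => ?_, fun _ hj => (hE.spin hj).2, fun _ hj => (hnonneg hj).1,
    fun _ hj => (hnonneg hj).2⟩ <;> obtain ⟨-, -, hfork, hrows, -⟩ := hE
  · rcases le_or_gt (n - 1) j with hjn | hjn
    · rw [hzero (by omega : n ≤ j + 1)]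
      exact add_nonneg (hnonneg hj).1 (hnonneg hj).2
    · exact (hfork j hj (by omega)).1
  · rcases le_or_gt n j with hjn | hjn
    · simp [hzero hjn]
    · exact (hrows j hj (by omega)).2.1
  · rcases le_or_gt n j with hjn | hjn
    · simp [hzero hjn]
    · exact (hrows j (by omega) (by omega)).1 i (by omega) (by omega)

end SigmaDExplicit

theorem typeD_polyhedral_realization_general (n : ℕ) (hn : 4 ≤ n) (y : ℕ → ℕ → ℤ)
    (hconv : ∀ j i, j = 0 ∨ i = 0 ∨ n < i → y j i = 0) :
    ((∀ j k : ℕ, 1 ≤ j → k ≤ 2 * n - 2 →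
      0 ≤ (if k ≤ n - 3 then Yc n y j (k + 1) - Yc n y (j + 1) k
           else if k = n - 2 then Yc n y j (n - 1) + Yc n y j n - Yc n y (j + 1) (n - 2)
           else if k = n - 1 then Yc n y j n - Yc n y (j + 1) (n - 1)
           else if k = n then
             Yc n y (j + 1) (n - 2) - Yc n y (j + 1) (n - 1) - Yc n y (j + 1) n
           else Yc n y (j + k - n + 1) (2 * n - k - 2) - Yc n y (j + k - n + 1) (2 * n - k - 1))) ∧
     (∀ j : ℕ, 1 ≤ j → 0 ≤ Yc n y j (n - 1) - Yc n y (j + 1) n) ∧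
     (∀ j : ℕ, 1 ≤ j → 0 ≤ y j (n - 1) ∧ 0 ≤ y j n))
    ↔
    ((∀ j i, ¬(1 ≤ j ∧ j ≤ n - 1 ∧ 1 ≤ i ∧ i ≤ n) → y j i = 0) ∧
     (∀ i, 1 ≤ i → i ≤ n - 2 →
        (∀ t, 1 ≤ t → t < i → y (t + 1) (i - t) ≤ y t (i - t + 1)) ∧ 0 ≤ y i 1) ∧
     (∀ j, 1 ≤ j → j ≤ n - 2 →
        y (j + 1) (n - 2) ≤ y j (n - 1) + y j n ∧
        (∀ t, j + 1 ≤ t → t < n - 1 → y (t + 1) (n + j - t - 2) ≤ y t (n + j - t - 1)) ∧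
        0 ≤ y (n - 1) j) ∧
     (∀ j, 2 ≤ j → j ≤ n - 1 →
        (∀ i, n - j ≤ i → i < n - 2 → y j (i + 1) ≤ y j i) ∧
        y j (n - 1) + y j n ≤ y j (n - 2) ∧ 0 ≤ y j (n - 1) + y j n) ∧
     ((∀ t, 1 ≤ t → t < n - 1 →
        y (t + 1) (if (t + 1) % 2 = 1 then n - 1 else n) ≤ y t (if t % 2 = 1 then n - 1 else n)) ∧
      0 ≤ y (n - 1) (if (n - 1) % 2 = 1 then n - 1 else n)) ∧
     ((∀ t, 1 ≤ t → t < n - 1 →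
        y (t + 1) (if (t + 1) % 2 = 1 then n else n - 1) ≤ y t (if t % 2 = 1 then n else n - 1)) ∧
      0 ≤ y (n - 1) (if (n - 1) % 2 = 1 then n else n - 1))) :=
  (xiNonneg_iff (by omega) hconv).trans
    ⟨fun h => h.sigmaDExplicit (by omega) hconv,
      fun h => SigmaDExplicit.xiNonneg h (by omega) hconv⟩

theorem typeD_polyhedral_realization (n : ℕ) (hn : 4 ≤ n) (y : ℕ → ℕ → ℤ)
    (hconv : ∀ j i, j = 0 ∨ i = 0 ∨ n < i → y j i = 0)
    (hfin : ∃ N, ∀ j, N ≤ j → ∀ i, y j i = 0) :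
    ((∀ j k : ℕ, 1 ≤ j → k ≤ 2 * n - 2 →
      0 ≤ (if k ≤ n - 3 then Yc n y j (k + 1) - Yc n y (j + 1) k
           else if k = n - 2 then Yc n y j (n - 1) + Yc n y j n - Yc n y (j + 1) (n - 2)
           else if k = n - 1 then Yc n y j n - Yc n y (j + 1) (n - 1)
           else if k = n then
             Yc n y (j + 1) (n - 2) - Yc n y (j + 1) (n - 1) - Yc n y (j + 1) n
           else Yc n y (j + k - n + 1) (2 * n - k - 2) - Yc n y (j + k - n + 1) (2 * n - k - 1))) ∧
     (∀ j : ℕ, 1 ≤ j → 0 ≤ Yc n y j (n - 1) - Yc n y (j + 1) n) ∧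
     (∀ j : ℕ, 1 ≤ j → 0 ≤ y j (n - 1) ∧ 0 ≤ y j n))
    ↔
    ((∀ j i, ¬(1 ≤ j ∧ j ≤ n - 1 ∧ 1 ≤ i ∧ i ≤ n) → y j i = 0) ∧
     (∀ i, 1 ≤ i → i ≤ n - 2 →
        (∀ t, 1 ≤ t → t < i → y (t + 1) (i - t) ≤ y t (i - t + 1)) ∧ 0 ≤ y i 1) ∧
     (∀ j, 1 ≤ j → j ≤ n - 2 →
        y (j + 1) (n - 2) ≤ y j (n - 1) + y j n ∧
        (∀ t, j + 1 ≤ t → t < n - 1 → y (t + 1) (n + j - t - 2) ≤ y t (n + j - t - 1)) ∧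
        0 ≤ y (n - 1) j) ∧
     (∀ j, 2 ≤ j → j ≤ n - 1 →
        (∀ i, n - j ≤ i → i < n - 2 → y j (i + 1) ≤ y j i) ∧
        y j (n - 1) + y j n ≤ y j (n - 2) ∧ 0 ≤ y j (n - 1) + y j n) ∧
     ((∀ t, 1 ≤ t → t < n - 1 →
        y (t + 1) (if (t + 1) % 2 = 1 then n - 1 else n) ≤ y t (if t % 2 = 1 then n - 1 else n)) ∧
      0 ≤ y (n - 1) (if (n - 1) % 2 = 1 then n - 1 else n)) ∧
     ((∀ t, 1 ≤ t → t < n - 1 →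
        y (t + 1) (if (t + 1) % 2 = 1 then n else n - 1) ≤ y t (if t % 2 = 1 then n else n - 1)) ∧
      0 ≤ y (n - 1) (if (n - 1) % 2 = 1 then n else n - 1))) :=
  typeD_polyhedral_realization_general n hn y hconv
end
end

section
/- For type D_n, let μ be an admissible pattern (1 ≤ μ_1 ≤ n−1, 0 ≤ μ_k ≤ μ_{k−1}−1) with l = max{k : μ_k ≠ 0}. Then φ^{(μ)}X = Σ_{k=1}^{l} ( X_{μ_k+k−1; n−μ_k−1} − X_{μ_k+k−1; n−μ_k} ) if μ_l = 1, and φ^{(μ)}X = Σ_{k=1}^{l} ( X_{μ_k+k−1; n−μ_k−1} − X_{μ_k+k−1; n−μ_k} ) + X_{l;n} if μ_l ≥ 2, where X_{j;n−1} = x_{j;n} and X_{j;n} = x_{j;n−1} for j even, and X_{j;i} = x_{j;i} otherwise. -/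
open scoped Classical

noncomputable section

variable {I : Type*}

/-- k^{(+)}: the next position after k carrying the same index. -/
def kplus (ι : ℕ → I) (k : ℕ) : ℕ := sInf {l | k < l ∧ ι l = ι k}

/-- k^{(-)}: the previous position (≥ 1) carrying the same index, 0 if none. -/
def kminus (ι : ℕ → I) (k : ℕ) : ℕ := sSup {l | 0 < l ∧ l < k ∧ ι l = ι k}

/-- coefficient vector of the linear form β_k = x_k + Σ_{k<j<k^{(+)}} ⟨h_{i_k},α_{i_j}⟩ x_j + x_{k^{(+)}},
with β_0 = 0. -/
def betaF (a : I → I → ℤ) (ι : ℕ → I) (k : ℕ) : ℕ → ℚ := fun j =>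
  if k = 0 then 0 else
    (if j = k then 1 else 0)
    + (if k < j ∧ j < kplus ι k then (a (ι k) (ι j) : ℚ) else 0)
    + (if j = kplus ι k then 1 else 0)

/-- the piecewise-linear operator S_k on linear forms (coefficient vectors). -/
def Sop (a : I → I → ℤ) (ι : ℕ → I) (k : ℕ) (φ : ℕ → ℚ) : ℕ → ℚ :=
  if 0 < φ k then φ - φ k • betaF a ι k else φ - φ k • betaF a ι (kminus ι k)

/-- evaluation of a linear form at a point of ℤ^∞. -/
def evalF (φ : ℕ → ℚ) (x : ℕ → ℤ) : ℚ := ∑' l : ℕ, φ l * (x l : ℚ)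

/-- the coordinate linear form x_m. -/
def coordF (m : ℕ) : ℕ → ℚ := fun l => if l = m then 1 else 0

/-- the coordinate linear form x_{j;i}, with the convention x_{j;0} = x_{j;n+1} = 0. -/
def cX (n j i : ℕ) : ℕ → ℚ :=
  if 1 ≤ j ∧ 1 ≤ i ∧ i ≤ n then coordF (pos n j i) else 0
/-- Cartan matrix of type B_n: a_{n-1,n} = -2, a_{n,n-1} = -1. -/
def aB (n : ℕ) (i j : ℕ) : ℤ :=
  if i = j then 2
  else if i + 1 = j then (if j = n then -2 else -1)
  else if j + 1 = i then -1
  else 0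

/-- Cartan matrix of type C_n: a_{n-1,n} = -1, a_{n,n-1} = -2. -/
def aC (n : ℕ) (i j : ℕ) : ℤ :=
  if i = j then 2
  else if i + 1 = j then -1
  else if j + 1 = i then (if i = n then -2 else -1)
  else 0

/-- Cartan matrix of type D_n. -/
def aD (n : ℕ) (i j : ℕ) : ℤ :=
  if i = j then 2
  else if (i + 1 = j ∧ j + 1 ≤ n) ∨ (j + 1 = i ∧ i + 1 ≤ n)
        ∨ (i + 2 = j ∧ j = n) ∨ (j + 2 = i ∧ i = n) then -1
  else 0

/-- Cartan matrix of type F_4: a_{23} = -2, a_{32} = -1. -/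
def aF4 (i j : ℕ) : ℤ :=
  if i = j then 2
  else if i = 2 ∧ j = 3 then -2
  else if i + 1 = j ∨ j + 1 = i then -1
  else 0
/-- S^{(μ_1)} chain for D_n: t-th step applies S_{t;n-1-t}. -/
def chain1D (n : ℕ) : ℕ → (ℕ → ℚ) → (ℕ → ℚ)
  | 0 => id
  | t + 1 => fun φ => Sop (aD n) (iotaSeq n) (pos n (t + 1) (n - 1 - (t + 1))) (chain1D n t φ)

/-- S^{(μ_k)} chain (k ≥ 2) for D_n: first step S_{k-1;n} (k even) or S_{k-1;n-1} (k odd),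
then step t applies S_{k-1+t;n-1-t}. -/
def chainKD (n k : ℕ) : ℕ → (ℕ → ℚ) → (ℕ → ℚ)
  | 0 => id
  | 1 => fun φ => Sop (aD n) (iotaSeq n) (pos n (k - 1) (if k % 2 = 0 then n else n - 1)) φ
  | t + 2 => fun φ =>
      Sop (aD n) (iotaSeq n) (pos n (k - 1 + (t + 1)) (n - 1 - (t + 1))) (chainKD n k (t + 1) φ)

/-- φ^{(μ)} for D_n. -/
def phiMuD (n : ℕ) (μ : ℕ → ℕ) : ℕ → (ℕ → ℚ) → (ℕ → ℚ)
  | 0 => id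
  | 1 => fun φ => if μ 1 = 1 then φ else chain1D n (μ 1 - 1) φ
  | k + 2 => fun φ => chainKD n (k + 2) (μ (k + 2)) (phiMuD n μ (k + 1) φ)

/-- admissible pattern: 1 ≤ μ_1 ≤ m, and 0 ≤ μ_k ≤ μ_{k-1} - 1 for k ≥ 2. -/
def AdmissiblePat (m : ℕ) (μ : ℕ → ℕ) : Prop :=
  1 ≤ μ 1 ∧ μ 1 ≤ m ∧ ∀ k, 2 ≤ k → (μ k = 0 ∨ μ k + 1 ≤ μ (k - 1))
/-- X = x_{1;n-2} - x_{1;n-1} for type D_n. -/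
def XformD (n : ℕ) : ℕ → ℚ := cX n 1 (n - 2) - cX n 1 (n - 1)

/-- X_{j;n-1} = x_{j;n} and X_{j;n} = x_{j;n-1} for j even, X_{j;i} = x_{j;i} otherwise. -/
def capXD (n j i : ℕ) : ℕ → ℚ :=
  if j % 2 = 0 ∧ i = n - 1 then cX n j n
  else if j % 2 = 0 ∧ i = n then cX n j (n - 1)
  else cX n j i

/-! Every operator S_k in φ^{(μ)} meets a form whose coefficient at x_k is exactly 1, so it acts as
φ ↦ φ - β_k. In type D_n this moves the pair X_{j;i} - X_{j;i+1} one row down and one column to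
the left; at the fork i = n-2 it also leaves X_{j;n} behind, and the first factor of S^{(μ_k)}
turns that leftover X_{k-1;n} into the pair X_{k;n-2} - X_{k;n-1}. Since μ_k + k is
non-increasing, the pairs produced by S^{(μ_1)}, …, S^{(μ_{k-1})} lie in rows ≥ μ_k + k - 1, below
every coefficient read by S^{(μ_k)}, so the contributions simply add up. -/

lemma pos_lt_pos_of_lt {n j j' i i' : ℕ} (hj : 1 ≤ j) (hjj' : j < j') (hin : i ≤ n) (hi' : 1 ≤ i') :
    pos n j i < pos n j' i' := by
  obtain ⟨a, rfl⟩ : ∃ a, j = a + 1 := ⟨j - 1, by omega⟩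
  obtain ⟨b, rfl⟩ : ∃ b, j' = b + 1 := ⟨j' - 1, by omega⟩
  have := Nat.mul_le_mul_right n (show a + 1 ≤ b by omega)
  simp only [pos, Nat.add_sub_cancel, add_mul, one_mul] at this ⊢
  omega

lemma pos_lt_pos_iff {n j j' i i' : ℕ} (hj : 1 ≤ j) (hj' : 1 ≤ j') (hi : 1 ≤ i) (hin : i ≤ n)
    (hi' : 1 ≤ i') (hin' : i' ≤ n) : pos n j i < pos n j' i' ↔ j < j' ∨ j = j' ∧ i < i' := by
  rcases lt_trichotomy j j' with h | rfl | h
  · simp [h, pos_lt_pos_of_lt hj h hin hi']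
  · simp [pos]
  · have := pos_lt_pos_of_lt hj' h hin' hi
    constructor <;> intro <;> omega

lemma pos_eq_pos_iff {n j j' i i' : ℕ} (hj : 1 ≤ j) (hj' : 1 ≤ j') (hi : 1 ≤ i) (hin : i ≤ n)
    (hi' : 1 ≤ i') (hin' : i' ≤ n) : pos n j i = pos n j' i' ↔ j = j' ∧ i = i' := by
  have h₁ := pos_lt_pos_iff hj hj' hi hin hi' hin'
  have h₂ := pos_lt_pos_iff hj' hj hi' hin' hi hin
  constructor
  · intro h; rw [h] at h₁ h₂; omega
  · rintro ⟨rfl, rfl⟩; rfl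

lemma exists_pos_eq {n m : ℕ} (hn : 1 ≤ n) (hm : 1 ≤ m) :
    ∃ j i, 1 ≤ j ∧ 1 ≤ i ∧ i ≤ n ∧ m = pos n j i := by
  refine ⟨(m - 1) / n + 1, (m - 1) % n + 1, le_add_self, le_add_self, Nat.mod_lt _ hn, ?_⟩
  have := Nat.div_add_mod' (m - 1) n
  simp only [pos, Nat.add_sub_cancel]
  omega

lemma iotaSeq_pos {n : ℕ} (j : ℕ) {i : ℕ} (hi : 1 ≤ i) (hin : i ≤ n) :
    iotaSeq n (pos n j i) = i := by
  have : (j - 1) * n + i - 1 = i - 1 + (j - 1) * n := by omega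
  rw [iotaSeq, pos, this, Nat.add_mul_mod_self_right, Nat.mod_eq_of_lt (by omega)]
  omega

lemma kplus_pos {n j i : ℕ} (hj : 1 ≤ j) (hi : 1 ≤ i) (hin : i ≤ n) :
    kplus (iotaSeq n) (pos n j i) = pos n (j + 1) i := by
  have hmem : pos n (j + 1) i ∈ {l | pos n j i < l ∧ iotaSeq n l = iotaSeq n (pos n j i)} :=
    ⟨pos_lt_pos_of_lt hj (by omega) hin hi, by rw [iotaSeq_pos _ hi hin, iotaSeq_pos _ hi hin]⟩
  refine le_antisymm (Nat.sInf_le hmem) (le_csInf ⟨_, hmem⟩ ?_)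
  rintro l ⟨hlt, hl⟩
  obtain ⟨j', i', hj', hi', hin', rfl⟩ := exists_pos_eq (n := n) (by omega) (show 1 ≤ l by omega)
  rw [iotaSeq_pos _ hi' hin', iotaSeq_pos _ hi hin] at hl
  subst hl
  rw [pos_lt_pos_iff hj hj' hi hin hi hin] at hlt
  rw [← not_lt, pos_lt_pos_iff hj' (by omega) hi hin hi hin]
  omega

lemma cX_pos {n : ℕ} (a b : ℕ) {j i : ℕ} (hj : 1 ≤ j) (hi : 1 ≤ i) (hin : i ≤ n) :
    cX n a b (pos n j i) = if a = j ∧ b = i then 1 else 0 := by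
  by_cases hv : 1 ≤ a ∧ 1 ≤ b ∧ b ≤ n
  · simp only [cX, if_pos hv, coordF, pos_eq_pos_iff hj hv.1 hi hin hv.2.1 hv.2.2, eq_comm]
  · rw [cX, if_neg hv, if_neg (by rintro ⟨rfl, rfl⟩; exact hv ⟨hj, hi, hin⟩)]
    rfl

lemma cX_apply_zero (n a b : ℕ) : cX n a b 0 = 0 := by
  rw [cX]
  split_ifs
  · exact if_neg (by simp only [pos]; omega)
  · rfl

/- β_{j;i} in type D_n is x_{j;i} + x_{j+1;i} minus the Dynkin neighbours of i: those of larger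
index in row j (i+1 if i ≤ n-2, and n if i = n-2), those of smaller index in row j+1 (i-1, or n-2
if i = n). -/
def betaD (n j i : ℕ) : ℕ → ℚ :=
  cX n j i + cX n (j+1) i
  - (if i + 2 ≤ n then cX n j (i+1) else 0)
  - (if i + 2 = n then cX n j n else 0)
  - (if i = n then cX n (j+1) (n-2) else cX n (j+1) (i-1))

lemma betaF_aD_pos {n j i : ℕ} (hj : 1 ≤ j) (hi : 1 ≤ i) (hin : i ≤ n) :
    betaF (aD n) (iotaSeq n) (pos n j i) = betaD n j i := by
  have hk : pos n j i ≠ 0 := by simp only [pos]; omega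
  funext m
  rcases Nat.eq_zero_or_pos m with rfl | hm
  · have hk' : pos n (j + 1) i ≠ 0 := by simp only [pos]; omega
    simp [betaF, betaD, hk.symm, hk'.symm, kplus_pos hj hi hin, cX_apply_zero,
      apply_ite (fun f : ℕ → ℚ => f 0)]
  obtain ⟨j', i', hj', hi', hin', rfl⟩ := exists_pos_eq (n := n) (by omega) hm
  simp only [betaF, if_neg hk, kplus_pos hj hi hin, iotaSeq_pos _ hi hin, iotaSeq_pos _ hi' hin',
    pos_eq_pos_iff hj' hj hi' hin' hi hin, pos_eq_pos_iff hj' (Nat.le_add_left 1 j) hi' hin' hi hin,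
    pos_lt_pos_iff hj hj' hi hin hi' hin', pos_lt_pos_iff hj' (Nat.le_add_left 1 j) hi' hin' hi hin,
    betaD, Pi.add_apply, Pi.sub_apply, apply_ite (fun f : ℕ → ℚ => f (pos n j' i')), Pi.zero_apply,
    cX_pos _ _ hj' hi' hin']
  obtain h | h | h : j' < j ∨ j + 1 < j' ∨ (j = j' ∨ j' = j + 1) := by omega
  · simp [h.ne, h.not_gt, (show j' ≠ j + 1 by omega), (show j ≠ j' by omega),
      (show j + 1 ≠ j' by omega)]
  · simp [h.ne', (show j' ≠ j by omega), (show j ≠ j' by omega), (show j + 1 ≠ j' by omega),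
      (show ¬ j' < j + 1 by omega)]
  · obtain rfl | rfl := h <;>
    simp only [aD, true_and, and_true, false_and, lt_self_iff_false, false_or, or_false,
      Nat.left_eq_add, Nat.add_eq_left, one_ne_zero, lt_add_iff_pos_right,
      Order.lt_one_iff, Order.add_one_le_iff, Int.cast_ite, Int.cast_ofNat, Int.cast_neg,
      Int.cast_one, Int.cast_zero, ↓reduceIte, add_zero, zero_add, sub_zero, ite_self] <;>
    split_ifs <;> first | omega | norm_num

lemma Sop_of_apply_eq_one {a : I → I → ℤ} {ι : ℕ → I} {k : ℕ} {φ : ℕ → ℚ} (h : φ k = 1) :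
    Sop a ι k φ = φ - betaF a ι k := by
  rw [Sop, if_pos (by rw [h]; exact one_pos), h, one_smul]

def colXD (n j i : ℕ) : ℕ :=
  if j % 2 = 0 ∧ i = n - 1 then n else if j % 2 = 0 ∧ i = n then n - 1 else i

lemma capXD_eq_cX (n j i : ℕ) : capXD n j i = cX n j (colXD n j i) := by
  unfold capXD colXD
  split_ifs <;> rfl

lemma capXD_of_add_two_le {n i : ℕ} (j : ℕ) (h : i + 2 ≤ n) : capXD n j i = cX n j i := by
  rw [capXD_eq_cX, colXD, if_neg (by omega), if_neg (by omega)]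

lemma capXD_of_odd {n j : ℕ} (i : ℕ) (h : j % 2 = 1) : capXD n j i = cX n j i := by
  rw [capXD_eq_cX, colXD, if_neg (by omega), if_neg (by omega)]

lemma capXD_add_capXD_last {n : ℕ} (j : ℕ) (hn : 1 ≤ n) :
    capXD n j (n - 1) + capXD n j n = cX n j (n - 1) + cX n j n := by
  rw [capXD_eq_cX, capXD_eq_cX, colXD, colXD]
  split_ifs <;> first | rfl | exact add_comm _ _ | omega

lemma capXD_pos {n : ℕ} (a b : ℕ) {j i : ℕ} (hj : 1 ≤ j) (hi : 1 ≤ i) (hin : i ≤ n) :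
    capXD n a b (pos n j i) = if a = j ∧ colXD n a b = i then 1 else 0 := by
  rw [capXD_eq_cX, cX_pos _ _ hj hi hin]

lemma capXD_pos_of_lt {n a j i : ℕ} (b : ℕ) (hj : 1 ≤ j) (hja : j < a) (hin : i ≤ n) :
    capXD n a b (pos n j i) = 0 := by
  rw [capXD_eq_cX, cX]
  split_ifs with hv
  · exact if_neg (pos_lt_pos_of_lt hj hja hin hv.2.1).ne
  · rfl

lemma sum_capXD_sub_capXD_pos_of_lt {n j i : ℕ} {s : Finset ℕ} {r c c' : ℕ → ℕ} (hj : 1 ≤ j)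
    (hin : i ≤ n) (hr : ∀ k ∈ s, j < r k) :
    (∑ k ∈ s, (capXD n (r k) (c k) - capXD n (r k) (c' k))) (pos n j i) = 0 := by
  simp only [Finset.sum_apply, Pi.sub_apply]
  refine Finset.sum_eq_zero fun k hk => ?_
  rw [capXD_pos_of_lt _ hj (hr k hk) hin, capXD_pos_of_lt _ hj (hr k hk) hin, sub_zero]

def pairD (n j i : ℕ) : ℕ → ℚ := capXD n j i - capXD n j (i + 1)

lemma pairD_of_add_three_le {n i : ℕ} (j : ℕ) (h : i + 3 ≤ n) :
    pairD n j i = cX n j i - cX n j (i + 1) := by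
  rw [pairD, capXD_of_add_two_le _ (by omega), capXD_of_add_two_le _ (by omega)]

lemma pairD_fork {n : ℕ} (j : ℕ) (hn : 2 ≤ n) :
    pairD n j (n - 2) = cX n j (n - 2) - capXD n j (n - 1) := by
  rw [pairD, capXD_of_add_two_le _ (by omega), show n - 2 + 1 = n - 1 by omega]

lemma capXD_pos_of_col_lt {n b j i : ℕ} (a : ℕ) (hj : 1 ≤ j) (hi : 1 ≤ i) (hin : i + 2 ≤ n)
    (hb : n - 1 ≤ b) : capXD n a b (pos n j i) = 0 := by
  rw [capXD_pos _ _ hj hi (by omega), if_neg]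
  rintro ⟨-, h⟩
  unfold colXD at h
  split_ifs at h <;> omega

section Steps

variable {n : ℕ} {C : ℕ → ℚ}

lemma Sop_pairD {j i : ℕ} (hj : 1 ≤ j) (hi : 1 ≤ i) (hin : i + 3 ≤ n) (hC : C (pos n j i) = 0) :
    Sop (aD n) (iotaSeq n) (pos n j i) (C + pairD n j i) = C + pairD n (j + 1) (i - 1) := by
  rw [pairD_of_add_three_le _ hin, pairD_of_add_three_le _ (by omega), Nat.sub_add_cancel hi]
  have hcoeff : (C + (cX n j i - cX n j (i + 1))) (pos n j i) = 1 := by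
    simp [hC, cX_pos _ _ hj hi (show i ≤ n by omega)]
  rw [Sop_of_apply_eq_one hcoeff, betaF_aD_pos hj hi (by omega), betaD, if_pos (by omega),
    if_neg (by omega), if_neg (by omega)]
  abel

lemma Sop_pairD_fork {j : ℕ} (hj : 1 ≤ j) (hn : 3 ≤ n) (hC : C (pos n j (n - 2)) = 0) :
    Sop (aD n) (iotaSeq n) (pos n j (n - 2)) (C + pairD n j (n - 2)) =
      C + capXD n j n + pairD n (j + 1) (n - 3) := by
  rw [pairD_fork _ (by omega), pairD_of_add_three_le _ (by omega), show n - 3 + 1 = n - 2 by omega]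
  have hcoeff : (C + (cX n j (n - 2) - capXD n j (n - 1))) (pos n j (n - 2)) = 1 := by
    simp [hC, cX_pos _ _ hj (show 1 ≤ n - 2 by omega) (show n - 2 ≤ n by omega),
      capXD_pos_of_col_lt j hj (show 1 ≤ n - 2 by omega) (show n - 2 + 2 ≤ n by omega) le_rfl]
  rw [Sop_of_apply_eq_one hcoeff, betaF_aD_pos hj (by omega) (by omega), betaD, if_pos (by omega),
    if_pos (by omega), if_neg (by omega), show n - 2 + 1 = n - 1 by omega,
    show n - 2 - 1 = n - 3 by omega]
  linear_combination -(capXD_add_capXD_last (n := n) j (by omega))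

lemma Sop_capXD_last {k : ℕ} (hk : 2 ≤ k) (hn : 3 ≤ n)
    (hC : C (pos n (k - 1) (if k % 2 = 0 then n else n - 1)) = 0) :
    Sop (aD n) (iotaSeq n) (pos n (k - 1) (if k % 2 = 0 then n else n - 1))
      (C + capXD n (k - 1) n) = C + pairD n k (n - 2) := by
  rw [pairD_fork _ (by omega)]
  by_cases hpar : k % 2 = 0
  · rw [if_pos hpar] at hC ⊢
    rw [capXD_of_odd _ (by omega), show capXD n k (n - 1) = cX n k n by simp [capXD, hpar]]
    have hcoeff : (C + cX n (k - 1) n) (pos n (k - 1) n) = 1 := by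
      simp [hC, cX_pos _ _ (show 1 ≤ k - 1 by omega) (show 1 ≤ n by omega) le_rfl]
    rw [Sop_of_apply_eq_one hcoeff, betaF_aD_pos (by omega) (by omega) le_rfl, betaD,
      if_neg (by omega), if_neg (by omega), if_pos rfl, Nat.sub_add_cancel (by omega : 1 ≤ k)]
    abel
  · rw [if_neg hpar] at hC ⊢
    rw [show capXD n (k - 1) n = cX n (k - 1) (n - 1) by
        simp [capXD, show (k - 1) % 2 = 0 by omega, show n ≠ n - 1 by omega],
      capXD_of_odd _ (by omega)]
    have hcoeff : (C + cX n (k - 1) (n - 1)) (pos n (k - 1) (n - 1)) = 1 := by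
      simp [hC, cX_pos _ _ (show 1 ≤ k - 1 by omega) (show 1 ≤ n - 1 by omega) (Nat.sub_le n 1)]
    rw [Sop_of_apply_eq_one hcoeff, betaF_aD_pos (by omega) (by omega) (Nat.sub_le n 1), betaD,
      if_neg (by omega), if_neg (by omega), if_neg (by omega),
      Nat.sub_add_cancel (by omega : 1 ≤ k), show n - 1 - 1 = n - 2 by omega]
    abel

end Steps

lemma XformD_eq_pairD {n : ℕ} (hn : 2 ≤ n) : XformD n = pairD n 1 (n - 2) := by
  rw [XformD, pairD, capXD_of_odd _ rfl, capXD_of_odd _ rfl, show n - 2 + 1 = n - 1 by omega]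

lemma chain1D_XformD {n : ℕ} (hn : 3 ≤ n) : ∀ t, t + 2 ≤ n →
    chain1D n t (XformD n) = (if 1 ≤ t then capXD n 1 n else 0) + pairD n (t + 1) (n - 2 - t)
  | 0, _ => by simp [chain1D, XformD_eq_pairD (n := n) (by omega)]
  | 1, _ => by
    have h := Sop_pairD_fork (C := 0) le_rfl (by omega) rfl
    rw [zero_add, zero_add, ← XformD_eq_pairD (by omega)] at h
    simpa [chain1D, show n - 1 - 1 = n - 2 by omega, show n - 2 - 1 = n - 3 by omega] using h
  | t + 2, ht => by
    have hC : capXD n 1 n (pos n (t + 2) (n - 3 - t)) = 0 :=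
      capXD_pos_of_col_lt 1 (by omega) (by omega) (by omega) (by omega)
    rw [chain1D]
    beta_reduce
    rw [chain1D_XformD hn (t + 1) (by omega), if_pos le_add_self, if_pos (by omega),
      show n - 1 - (t + 1 + 1) = n - 3 - t by omega, show n - 2 - (t + 1) = n - 3 - t by omega,
      Sop_pairD (by omega) (by omega) (by omega) hC, show n - 2 - (t + 2) = n - 3 - t - 1 by omega]

lemma chainKD_add_capXD {n k : ℕ} (hn : 3 ≤ n) (hk : 2 ≤ k) {C : ℕ → ℚ} : ∀ t, 1 ≤ t → t + 1 ≤ n →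
    (∀ j i, 1 ≤ j → j + 2 ≤ k + t → i ≤ n → C (pos n j i) = 0) →
    chainKD n k t (C + capXD n (k - 1) n) =
      C + (if 2 ≤ t then capXD n k n else 0) + pairD n (t + k - 1) (n - t - 1)
  | 1, _, _, hC => by
    rw [chainKD]
    beta_reduce
    rw [Sop_capXD_last hk (by omega) (hC _ _ (by omega) (by omega) (by split_ifs <;> omega)),
      if_neg (by omega), add_zero, show 1 + k - 1 = k by omega, show n - 1 - 1 = n - 2 by omega]
  | 2, _, _, hC => by
    rw [chainKD]
    beta_reduce
    rw [chainKD_add_capXD hn hk 1 le_rfl (by omega) (fun j i h1 h2 h3 => hC j i h1 (by omega) h3),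
      if_neg (by omega), add_zero, show 1 + k - 1 = k by omega, show n - 1 - 1 = n - 2 by omega,
      show k - 1 + (0 + 1) = k by omega,
      Sop_pairD_fork (by omega) (by omega) (hC _ _ (by omega) (by omega) (by omega)),
      if_pos le_rfl, show 2 + k - 1 = k + 1 by omega, show n - 2 - 1 = n - 3 by omega]
  | t + 3, _, _, hC => by
    have hC' : (C + capXD n k n) (pos n (t + k + 1) (n - t - 3)) = 0 := by
      rw [Pi.add_apply, hC _ _ (by omega) (by omega) (by omega),
        capXD_pos_of_col_lt k (by omega) (by omega) (by omega) (by omega), add_zero]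
    rw [chainKD]
    beta_reduce
    rw [chainKD_add_capXD hn hk (t + 2) (by omega) (by omega)
        (fun j i h1 h2 h3 => hC j i h1 (by omega) h3), if_pos (by omega), if_pos (by omega),
      show k - 1 + (t + 1 + 1) = t + k + 1 by omega, show n - 1 - (t + 1 + 1) = n - t - 3 by omega,
      show t + 2 + k - 1 = t + k + 1 by omega, show n - (t + 2) - 1 = n - t - 3 by omega,
      Sop_pairD (by omega) (by omega) (by omega) hC', show t + 3 + k - 1 = t + k + 1 + 1 by omega,
      show n - (t + 3) - 1 = n - t - 3 - 1 by omega]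

lemma AdmissiblePat.succ_le_of_ne_zero {m : ℕ} {μ : ℕ → ℕ} (hμ : AdmissiblePat m μ) {k : ℕ}
    (hk : 2 ≤ k) (h : μ k ≠ 0) : μ k + 1 ≤ μ (k - 1) :=
  (hμ.2.2 k hk).resolve_left h

lemma AdmissiblePat.apply_add_le_apply_add {m : ℕ} {μ : ℕ → ℕ} (hμ : AdmissiblePat m μ) {a b : ℕ}
    (ha : 1 ≤ a) (hab : a ≤ b) (hb : μ b ≠ 0) : μ b + b ≤ μ a + a := by
  induction b, hab using Nat.le_induction with
  | base => exact le_rfl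
  | succ b hab ih =>
    have h := hμ.succ_le_of_ne_zero (k := b + 1) (by omega) hb
    rw [Nat.add_sub_cancel] at h
    have := ih (by omega)
    omega

lemma phiMuD_one (n : ℕ) (μ : ℕ → ℕ) (φ : ℕ → ℚ) :
    phiMuD n μ 1 φ = chain1D n (μ 1 - 1) φ := by
  rw [phiMuD]
  split_ifs with h1
  · rw [h1]
    rfl
  · rfl

lemma phiMuD_succ {n L : ℕ} (μ : ℕ → ℕ) (hL : 1 ≤ L) (φ : ℕ → ℚ) :
    phiMuD n μ (L + 1) φ = chainKD n (L + 1) (μ (L + 1)) (phiMuD n μ L φ) := by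
  obtain ⟨P, rfl⟩ : ∃ P, L = P + 1 := ⟨L - 1, by omega⟩
  rfl

theorem typeD_phiMu_explicit_general (n : ℕ) (hn : 4 ≤ n) (μ : ℕ → ℕ)
    (hμ : AdmissiblePat (n - 1) μ) (L : ℕ) (hL0 : 1 ≤ L) (hL1 : μ L ≠ 0) :
    phiMuD n μ L (XformD n) =
      (∑ k ∈ Finset.Icc 1 L,
        (capXD n (μ k + k - 1) (n - μ k - 1) - capXD n (μ k + k - 1) (n - μ k)))
      + (if 2 ≤ μ L then capXD n L n else 0) := by
  induction L, hL0 using Nat.le_induction with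
  | base =>
    obtain ⟨h1, h2, -⟩ := hμ
    rw [phiMuD_one, chain1D_XformD (by omega) (μ 1 - 1) (by omega), Finset.Icc_self,
      Finset.sum_singleton, Nat.add_sub_cancel, pairD, Nat.sub_add_cancel h1,
      show n - 2 - (μ 1 - 1) = n - μ 1 - 1 by omega, show n - μ 1 - 1 + 1 = n - μ 1 by omega]
    simp only [show 1 ≤ μ 1 - 1 ↔ 2 ≤ μ 1 by omega]
    abel
  | succ L hL ih =>
    have hprev := hμ.succ_le_of_ne_zero (k := L + 1) (by omega) hL1
    rw [Nat.add_sub_cancel] at hprev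
    have hfirst := hμ.apply_add_le_apply_add le_rfl (by omega : 1 ≤ L + 1) hL1
    have hμ1 : μ 1 ≤ n - 1 := hμ.2.1
    have hpairs : ∀ j i, 1 ≤ j → j + 2 ≤ L + 1 + μ (L + 1) → i ≤ n →
        (∑ k ∈ Finset.Icc 1 L, (capXD n (μ k + k - 1) (n - μ k - 1) -
          capXD n (μ k + k - 1) (n - μ k))) (pos n j i) = 0 :=
      fun j i hj hjr hi => sum_capXD_sub_capXD_pos_of_lt hj hi fun k hk => by
        obtain ⟨hk1, hkL⟩ := Finset.mem_Icc.1 hk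
        have := hμ.apply_add_le_apply_add hk1 (by omega : k ≤ L + 1) hL1
        omega
    have hchain := chainKD_add_capXD (k := L + 1) (by omega) (by omega) _ (by omega) (by omega) hpairs
    rw [Nat.add_sub_cancel] at hchain
    rw [phiMuD_succ μ hL, ih (by omega), if_pos (by omega), hchain,
      Finset.sum_Icc_succ_top (by omega), pairD,
      show n - μ (L + 1) - 1 + 1 = n - μ (L + 1) by omega,
      show μ (L + 1) + (L + 1) - 1 = μ (L + 1) + L by omega]
    abel

theorem typeD_phiMu_explicit (n : ℕ) (hn : 4 ≤ n) (μ : ℕ → ℕ)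
    (hμ : AdmissiblePat (n - 1) μ) (L : ℕ) (hL0 : 1 ≤ L) (hL1 : μ L ≠ 0)
    (hL2 : ∀ k, L < k → μ k = 0) :
    phiMuD n μ L (XformD n) =
      (∑ k ∈ Finset.Icc 1 L,
        (capXD n (μ k + k - 1) (n - μ k - 1) - capXD n (μ k + k - 1) (n - μ k)))
      + (if 2 ≤ μ L then capXD n L n else 0) :=
  typeD_phiMu_explicit_general n hn μ hμ L hL0 hL1
end
end
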